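/- Let X be a complex Banach space, φ : X → X continuous linear, and m ≥ 1. The composition operator C_φ : P(^m X) → P(^m X) (with the sup norm) satisfies sup_n ‖C_φ^n‖ < ∞ if and only if sup_n ‖φ^n‖ < ∞, where φ^n and C_φ^n denote n-fold iterates. -/

import Mathlib

def IsHomogPoly {X : Type*} [NormedAddCommGroup X] [NormedSpace ℂ X] (m : ℕ) (p : X → ℂ) : Prop :=
  ∃ L : ContinuousMultilinearMap ℂ (fun _ : Fin m => X) ℂ, ∀ x, p x = L (fun _ => x)

noncomputable def polyNorm {X : Type*} [NormedAddCommGroup X] [NormedSpace ℂ X]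
    (p : X → ℂ) : ℝ :=
  ⨆ x : (Metric.closedBall (0 : X) 1), ‖p x‖

/-
Homogeneity gives `‖p y‖ ≤ ‖y‖ ^ m ‖p‖`, hence `‖C_T‖ ≤ ‖T‖ ^ m`. Conversely, testing `C_T`
on `p = f ^ m`, where `f` is a Hahn–Banach norming functional of `T y`, gives
`‖T y‖ ^ m ≤ ‖C_T‖ ‖y‖ ^ m`, hence `‖T‖ ≤ ‖C_T‖ ^ (1 / m)`. Applied to `T = φ ^ n`, with
`C_φ ^ n = C_{φ ^ n}`, the two bounds transfer power boundedness in both directions.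
-/

section

variable {X Y : Type*} [NormedAddCommGroup X] [NormedSpace ℂ X]
  [NormedAddCommGroup Y] [NormedSpace ℂ Y]

lemma polyNorm_nonneg (p : X → ℂ) : 0 ≤ polyNorm p :=
  Real.iSup_nonneg fun _ => norm_nonneg _

lemma polyNorm_le {p : X → ℂ} {c : ℝ} (hc : 0 ≤ c) (h : ∀ x, ‖x‖ ≤ 1 → ‖p x‖ ≤ c) :
    polyNorm p ≤ c :=
  Real.iSup_le (fun x => h x (mem_closedBall_zero_iff.mp x.2)) hc

namespace IsHomogPoly

variable {m : ℕ} {p : Y → ℂ}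

lemma pow_dual (m : ℕ) (f : StrongDual ℂ X) : IsHomogPoly m fun x => f x ^ m :=
  ⟨(ContinuousMultilinearMap.mkPiAlgebra ℂ (Fin m) ℂ).compContinuousLinearMap fun _ => f,
    fun x => by simp⟩

lemma comp (hp : IsHomogPoly m p) (T : X →L[ℂ] Y) : IsHomogPoly m fun x => p (T x) := by
  obtain ⟨L, hL⟩ := hp
  exact ⟨L.compContinuousLinearMap fun _ => T, fun x => by simp [hL]⟩

lemma map_smul (hp : IsHomogPoly m p) (c : ℂ) (y : Y) : p (c • y) = c ^ m * p y := by
  obtain ⟨L, hL⟩ := hp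
  simpa [hL] using L.map_smul_univ (fun _ => c) fun _ => y

lemma norm_le_polyNorm (hp : IsHomogPoly m p) {y : Y} (hy : ‖y‖ ≤ 1) :
    ‖p y‖ ≤ polyNorm p := by
  obtain ⟨L, hL⟩ := hp
  refine le_ciSup (f := fun y : Metric.closedBall (0 : Y) 1 => ‖p y‖) ⟨‖L‖, ?_⟩
    ⟨y, mem_closedBall_zero_iff.mpr hy⟩
  rintro _ ⟨⟨z, hz⟩, rfl⟩
  calc ‖p z‖ = ‖L fun _ => z‖ := by rw [hL]
    _ ≤ ‖L‖ * ∏ _ : Fin m, ‖z‖ := L.le_opNorm _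
    _ ≤ ‖L‖ * 1 := by
      gcongr
      exact Finset.prod_le_one (fun _ _ => norm_nonneg _)
        fun _ _ => mem_closedBall_zero_iff.mp hz
    _ = ‖L‖ := mul_one _

lemma norm_apply_le (hp : IsHomogPoly m p) (y : Y) : ‖p y‖ ≤ ‖y‖ ^ m * polyNorm p := by
  set u : Y := (‖y‖ : ℂ)⁻¹ • y
  have hy : y = (‖y‖ : ℂ) • u := by
    rcases eq_or_ne y 0 with rfl | hy0
    · simp
    · exact (smul_inv_smul₀ (by exact_mod_cast norm_ne_zero_iff.mpr hy0) y).symm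
  have hu : ‖u‖ ≤ 1 := by
    rw [norm_smul, norm_inv, Complex.norm_real, norm_norm]
    exact inv_mul_le_one
  calc ‖p y‖ = ‖y‖ ^ m * ‖p u‖ := by
        rw [hy, hp.map_smul, norm_mul, norm_pow, Complex.norm_real, norm_norm, ← hy]
    _ ≤ ‖y‖ ^ m * polyNorm p := by gcongr; exact hp.norm_le_polyNorm hu

lemma polyNorm_comp_le (hp : IsHomogPoly m p) (T : X →L[ℂ] Y) :
    polyNorm (fun x => p (T x)) ≤ ‖T‖ ^ m * polyNorm p := by
  refine polyNorm_le (by positivity [polyNorm_nonneg p]) fun x hx => ?_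
  have hTx : ‖T x‖ ≤ ‖T‖ := (T.le_opNorm x).trans (mul_le_of_le_one_right (norm_nonneg T) hx)
  calc ‖p (T x)‖ ≤ ‖T x‖ ^ m * polyNorm p := hp.norm_apply_le (T x)
    _ ≤ ‖T‖ ^ m * polyNorm p := by gcongr; exact polyNorm_nonneg p

end IsHomogPoly

lemma exists_isHomogPoly_norm_apply_eq (m : ℕ) (y : Y) :
    ∃ p : Y → ℂ, IsHomogPoly m p ∧ polyNorm p ≤ 1 ∧ ‖p y‖ = ‖y‖ ^ m := by
  obtain ⟨f, hf, hfy⟩ := exists_dual_vector'' ℂ y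
  refine ⟨fun x => f x ^ m, IsHomogPoly.pow_dual m f, polyNorm_le zero_le_one fun x hx => ?_, ?_⟩
  · rw [norm_pow]
    exact pow_le_one₀ (norm_nonneg _) ((f.le_opNorm x).trans (mul_le_one₀ hf (norm_nonneg x) hx))
  · simp [hfy]

lemma ContinuousLinearMap.opNorm_le_of_pow_le {m : ℕ} (hm : m ≠ 0) {T : X →L[ℂ] Y} {C : ℝ}
    (hC : 0 ≤ C) (h : ∀ x, ‖T x‖ ^ m ≤ C * ‖x‖ ^ m) : ‖T‖ ≤ C ^ (m⁻¹ : ℝ) := by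
  refine T.opNorm_le_bound (by positivity) fun x => ?_
  rw [← pow_le_pow_iff_left₀ (norm_nonneg _) (by positivity) hm, mul_pow,
    Real.rpow_inv_natCast_pow hC hm]
  exact h x

lemma opNorm_le_of_polyNorm_comp_le {m : ℕ} (hm : m ≠ 0) {T : X →L[ℂ] Y} {C : ℝ} (hC : 0 ≤ C)
    (h : ∀ p : Y → ℂ, IsHomogPoly m p → polyNorm (fun x => p (T x)) ≤ C * polyNorm p) :
    ‖T‖ ≤ C ^ (m⁻¹ : ℝ) := by
  refine ContinuousLinearMap.opNorm_le_of_pow_le hm hC fun x => ?_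
  obtain ⟨p, hp, hp1, hpTx⟩ := exists_isHomogPoly_norm_apply_eq m (T x)
  calc ‖T x‖ ^ m = ‖p (T x)‖ := hpTx.symm
    _ ≤ ‖x‖ ^ m * polyNorm (fun x => p (T x)) := (hp.comp T).norm_apply_le x
    _ ≤ ‖x‖ ^ m * (C * 1) := by gcongr; exact (h p hp).trans (mul_le_mul_of_nonneg_left hp1 hC)
    _ = C * ‖x‖ ^ m := by ring

end

theorem compOp_powerBounded_iff_general
    {X : Type*} [NormedAddCommGroup X] [NormedSpace ℂ X]
    (m : ℕ) (hm : 1 ≤ m) (φ : X →L[ℂ] X) :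
    (∃ C : ℝ, ∀ (n : ℕ) (p : X → ℂ), IsHomogPoly m p →
        polyNorm (fun x => p ((φ ^ n) x)) ≤ C * polyNorm p) ↔
      (∃ C : ℝ, ∀ n : ℕ, ‖φ ^ n‖ ≤ C) := by
  constructor
  · rintro ⟨C, hC⟩
    refine ⟨max C 0 ^ (m⁻¹ : ℝ), fun n => opNorm_le_of_polyNorm_comp_le (by omega)
      (le_max_right C 0) fun p hp => (hC n p hp).trans ?_⟩
    gcongr
    · exact polyNorm_nonneg p
    · exact le_max_left C 0
  · rintro ⟨C, hC⟩
    refine ⟨C ^ m, fun n p hp => (hp.polyNorm_comp_le (φ ^ n)).trans ?_⟩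
    gcongr
    · exact polyNorm_nonneg p
    · exact hC n

/-- The composition operator `C_φ` on `P(^m X)` is power bounded iff `φ` is power bounded. -/
theorem compOp_powerBounded_iff
    {X : Type*} [NormedAddCommGroup X] [NormedSpace ℂ X] [CompleteSpace X]
    (m : ℕ) (hm : 1 ≤ m) (φ : X →L[ℂ] X) :
    (∃ C : ℝ, ∀ (n : ℕ) (p : X → ℂ), IsHomogPoly m p →
        polyNorm (fun x => p ((φ ^ n) x)) ≤ C * polyNorm p) ↔
      (∃ C : ℝ, ∀ n : ℕ, ‖φ ^ n‖ ≤ C) :=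
  compOp_powerBounded_iff_general m hm φ
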